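/- arXiv:1801.06906 — 3 statements merged into one kernel-verified Lean document; each statement's English description precedes it below -/
import Mathlib

section
/- For Re(s) > 1 and a Dirichlet character χ mod q, the Dirichlet series ∑_{n≥1} Ω(n)χ(n)/n^s equals L(s,χ) · ∑_{m≥1} F(ms, χ^m), where F(s,χ) = ∑_p χ(p)/p^s, and the sum over m converges absolutely. -/
open ArithmeticFunction
open scoped ArithmeticFunction.Omega

lemma card_primePow_divisors : ∀ n : ℕ, n ≠ 0 →
    (n.divisors.filter IsPrimePow).card = Ω n := by
  intro n
  induction n using Nat.recOnPosPrimePosCoprime with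
  | prime_pow p k hp hk =>
    intro _
    rw [Nat.divisors_prime_pow hp, Finset.filter_map, Finset.card_map,
      cardFactors_apply_prime_pow hp]
    have h2 : Finset.filter (IsPrimePow ∘ ⇑(⟨(p ^ ·), Nat.pow_right_injective hp.two_le⟩ :
        ℕ ↪ ℕ)) (Finset.range (k + 1)) = Finset.filter (· ≠ 0) (Finset.range (k + 1)) := by
      refine Finset.filter_congr fun i _ ↦ ?_
      simp only [Function.comp_apply, Function.Embedding.coeFn_mk]
      constructor
      · intro h
        rintro rfl
        simp only [pow_zero] at h
        exact not_isPrimePow_one h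
      · intro h
        exact hp.isPrimePow.pow h
    rw [h2, Finset.filter_ne', Finset.card_erase_of_mem (by simp), Finset.card_range]
    rfl
  | zero => intro h; exact absurd rfl h
  | one =>
    intro _
    rw [Nat.divisors_one, Finset.filter_singleton, if_neg not_isPrimePow_one]
    simp
  | coprime a b ha hb hab iha ihb =>
    intro _
    have key : (a * b).divisors.filter IsPrimePow =
        (a.divisors.filter IsPrimePow) ∪ (b.divisors.filter IsPrimePow) := by
      ext d
      simp only [Finset.mem_union, Finset.mem_filter, Nat.mem_divisors]
      constructor
      · rintro ⟨⟨hd, hab0⟩, hpp⟩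
        rcases (hab.isPrimePow_dvd_mul hpp).mp hd with h' | h'
        · exact Or.inl ⟨⟨h', fun h => hab0 (by simp [h])⟩, hpp⟩
        · exact Or.inr ⟨⟨h', fun h => hab0 (by simp [h])⟩, hpp⟩
      · rintro (⟨⟨hd, h0⟩, hpp⟩ | ⟨⟨hd, h0⟩, hpp⟩)
        · exact ⟨⟨hd.mul_right b, mul_ne_zero h0 (by omega)⟩, hpp⟩
        · exact ⟨⟨hd.mul_left a, mul_ne_zero (by omega) h0⟩, hpp⟩
    have hdisj : Disjoint (a.divisors.filter IsPrimePow) (b.divisors.filter IsPrimePow) := by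
      rw [Finset.disjoint_left]
      intro d hd1 hd2
      simp only [Finset.mem_filter, Nat.mem_divisors] at hd1 hd2
      have hd : d ∣ Nat.gcd a b := Nat.dvd_gcd hd1.1.1 hd2.1.1
      rw [Nat.Coprime.gcd_eq_one hab] at hd
      exact not_isPrimePow_one (Nat.eq_one_of_dvd_one hd ▸ hd1.2)
    rw [key, Finset.card_union_of_disjoint hdisj, iha (by omega), ihb (by omega),
      cardFactors_mul (by omega) (by omega)]

open LSeries in
open scoped LSeries.notation in
lemma conv_aux {q : ℕ} (χ : DirichletCharacter ℂ q) (n : ℕ) :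
    ((↗χ : ℕ → ℂ) ⍟ fun k : ℕ => if IsPrimePow k then (χ k : ℂ) else 0) n
      = (Ω n : ℂ) * χ n := by
  rcases eq_or_ne n 0 with rfl | hn
  · simp
  rw [convolution_def]
  beta_reduce
  rw [Nat.sum_divisorsAntidiagonal' (f := fun x y => (χ x : ℂ) * (if IsPrimePow y then (χ y : ℂ) else 0))]
  simp only [mul_ite, mul_zero]
  rw [← Finset.sum_filter]
  have h : ∀ d ∈ n.divisors.filter IsPrimePow,
      (χ ((n / d : ℕ) : ZMod q) : ℂ) * χ ((d : ℕ) : ZMod q) = χ n := by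
    intro d hd
    rw [Finset.mem_filter, Nat.mem_divisors] at hd
    rw [← map_mul, ← Nat.cast_mul, Nat.div_mul_cancel hd.1.1]
  rw [Finset.sum_congr rfl h, Finset.sum_const, card_primePow_divisors n hn, nsmul_eq_mul]

open LSeries in
open scoped LSeries.notation in
/-- For `Re(s) > 1`, `∑_{n ≥ 1} Ω(n) χ(n) / n^s = L(s,χ) · ∑_{m ≥ 1} F(ms, χ^m)`
where `F(s,χ) = ∑_p χ(p)/p^s`, and the sum over `m` converges absolutely. -/
theorem dirichletSeries_bigOmega_eq {q : ℕ} [NeZero q] (χ : DirichletCharacter ℂ q)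
    (s : ℂ) (hs : 1 < s.re) :
    Summable (fun m : ℕ+ =>
      ‖∑' p : Nat.Primes, (χ ^ (m : ℕ)) (p : ℕ) / (p : ℕ) ^ ((m : ℕ) * s)‖) ∧
    ∑' n : ℕ, (Ω n : ℂ) * χ n / (n : ℂ) ^ s =
      (∑' n : ℕ, χ n / (n : ℂ) ^ s) *
        ∑' m : ℕ+, ∑' p : Nat.Primes, (χ ^ (m : ℕ)) (p : ℕ) / (p : ℕ) ^ ((m : ℕ) * s) := by
  classical
  have hs0 : s ≠ 0 := by
    rintro rfl
    simp at hs
    linarith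
  set g : ℕ → ℂ := fun n => if IsPrimePow n then (χ n : ℂ) else 0 with hg_def
  have hχsum : LSeriesSummable ↗χ s := DirichletCharacter.LSeriesSummable_of_one_lt_re χ hs
  have hgsum : LSeriesSummable g s := by
    refine LSeriesSummable_of_bounded_of_one_lt_re (m := 1) (fun n _ => ?_) hs
    simp only [hg_def]
    split
    · exact DirichletCharacter.norm_le_one χ _
    · simp
  have hnorm : Summable fun n => ‖term g s n‖ := summable_norm_iff.mpr hgsum
  set a : Nat.Primes × ℕ → ℂ := fun pk => term g s ((pk.1 : ℕ) ^ (pk.2 + 1)) with ha_def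
  have hinj : Function.Injective fun pk : Nat.Primes × ℕ => ((pk.1 : ℕ) ^ (pk.2 + 1)) := by
    have he : (fun pk : Nat.Primes × ℕ => ((pk.1 : ℕ) ^ (pk.2 + 1))) =
        Subtype.val ∘ Nat.Primes.prodNatEquiv := by
      ext pk
      exact (Nat.Primes.coe_prodNatEquiv_apply pk.1 pk.2).symm
    rw [he]
    exact Subtype.val_injective.comp Nat.Primes.prodNatEquiv.injective
  have hasum : Summable a := hgsum.comp_injective hinj
  have hanorm : Summable fun pk => ‖a pk‖ := hnorm.comp_injective hinj
  -- inner terms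
  have hinner : ∀ (m : ℕ+) (p : Nat.Primes),
      (χ ^ (m : ℕ)) ((p : ℕ) : ZMod q) / ((p : ℕ) : ℂ) ^ (((m : ℕ) : ℂ) * s)
        = a (p, (m : ℕ) - 1) := by
    intro m p
    have hm : (m : ℕ) - 1 + 1 = (m : ℕ) := Nat.succ_pred_eq_of_pos m.pos
    simp only [ha_def, hm]
    rw [term_of_ne_zero (pow_ne_zero _ p.prop.pos.ne') g s]
    have hmne : (m : ℕ) ≠ 0 := m.pos.ne'
    have hgval : g ((p : ℕ) ^ (m : ℕ)) = χ (((p : ℕ) : ZMod q)) ^ (m : ℕ) := by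
      simp only [hg_def, if_pos (p.prop.isPrimePow.pow hmne), Nat.cast_pow, map_pow]
    rw [hgval, Complex.natCast_cpow_natCast_mul, Nat.cast_pow,
      MulChar.pow_apply' χ hmne]
  have hpnatinj : Function.Injective fun m : ℕ+ => (m : ℕ) - 1 := by
    intro m₁ m₂ h
    have h1 := m₁.pos
    have h2 := m₂.pos
    simp only at h
    exact PNat.coe_injective (by omega)
  have hinner_sum : ∀ k : ℕ, Summable fun p : Nat.Primes => ‖a (p, k)‖ := by
    intro k
    exact hanorm.comp_injective (fun p₁ p₂ h => congrArg Prod.fst h)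
  -- first claim
  have hb : Summable fun k : ℕ => ∑' p : Nat.Primes, ‖a (p, k)‖ := by
    have hswap : Summable fun kp : ℕ × Nat.Primes => ‖a (kp.2, kp.1)‖ := hanorm.prod_symm
    exact ((summable_prod_of_nonneg (fun _ => norm_nonneg _)).mp hswap).2
  have claim1 : Summable (fun m : ℕ+ =>
      ‖∑' p : Nat.Primes, (χ ^ (m : ℕ)) ((p : ℕ) : ZMod q) / ((p:ℕ) : ℂ) ^ (((m:ℕ):ℂ) * s)‖) := by
    refine Summable.of_nonneg_of_le (fun _ => norm_nonneg _) (fun m => ?_)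
      (hb.comp_injective hpnatinj)
    rw [tsum_congr (fun p => hinner m p)]
    exact norm_tsum_le_tsum_norm (hinner_sum _)
  refine ⟨claim1, ?_⟩
  -- identify series with LSeries
  have hL1 : ∑' n : ℕ, (Ω n : ℂ) * χ n / (n : ℂ) ^ s = LSeries (fun n => (Ω n : ℂ) * χ n) s := by
    refine tsum_congr fun n => ?_
    rcases eq_or_ne n 0 with rfl | hn
    · simp [term_zero]
    · rw [term_of_ne_zero hn]
  have hL2 : ∑' n : ℕ, (χ n : ℂ) / (n : ℂ) ^ s = LSeries ↗χ s := by
    refine tsum_congr fun n => ?_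
    rcases eq_or_ne n 0 with rfl | hn
    · rw [term_zero]
      simp [Complex.zero_cpow hs0]
    · rw [term_of_ne_zero hn]
  -- support of term g s
  have hsupp : Function.support (term g s) ⊆ {n | IsPrimePow n} := by
    intro n hn
    rcases eq_or_ne n 0 with rfl | hn0
    · simp [term_zero] at hn
    by_contra h
    apply hn
    simp only [Set.mem_setOf_eq] at h
    rw [term_of_ne_zero hn0, hg_def]
    beta_reduce
    rw [if_neg h, zero_div]
  have hLg : LSeries g s = ∑' m : ℕ+, ∑' p : Nat.Primes,
      (χ ^ (m : ℕ)) ((p : ℕ) : ZMod q) / ((p:ℕ) : ℂ) ^ (((m:ℕ):ℂ) * s) := by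
    rw [show LSeries g s = ∑' n, term g s n from rfl,
      tsum_eq_tsum_primes_of_support_subset_prime_powers hgsum hsupp]
    have hcomm : ∑' (p : Nat.Primes) (k : ℕ), a (p, k) = ∑' (k : ℕ) (p : Nat.Primes), a (p, k) :=
      (Summable.tsum_comm (f := fun (p : Nat.Primes) (k : ℕ) => a (p, k)) (by exact hasum)).symm
    rw [show (∑' (p : Nat.Primes) (k : ℕ), term g s ((p:ℕ) ^ (k + 1)))
        = ∑' (p : Nat.Primes) (k : ℕ), a (p, k) from rfl, hcomm]
    rw [← Equiv.pnatEquivNat.tsum_eq (fun k => ∑' p : Nat.Primes, a (p, k))]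
    refine tsum_congr fun m => ?_
    rw [tsum_congr (fun p => hinner m p)]
    rfl
  rw [hL1, hL2, ← hLg]
  have hconv : (fun n => ((Ω n : ℕ) : ℂ) * χ n) = (↗χ : ℕ → ℂ) ⍟ g := by
    ext n
    exact (conv_aux χ n).symm
  rw [hconv, LSeries_convolution' hχsum hgsum]
end

section
/- For Re(s) > 1 and a Dirichlet character χ, the function G(s) := ∑_p χ(p)/p^s − log L(s,χ) + (1/2)·log L(2s,χ²) extends to a function given by an absolutely convergent Dirichlet series over prime powers p^m with m ≥ 3 (up to sign), and in particular converges absolutely for Re(s) ≥ 0.34. -/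
open Complex

namespace GACaux

lemma prime_pow_inj {p q m k : ℕ} (hp : p.Prime) (hq : q.Prime) (hm : m ≠ 0)
    (h : p ^ m = q ^ k) : p = q ∧ m = k := by
  have hpq : p = q := by
    have h1 : p ∣ q ^ k := h ▸ dvd_pow_self p hm
    have hk : k ≠ 0 := by
      rintro rfl
      rw [pow_zero] at h
      exact (Nat.one_lt_pow hm hp.one_lt).ne' h
    exact (Nat.prime_dvd_prime_iff_eq hp hq).mp (hp.dvd_of_dvd_pow h1)
  subst hpq
  exact ⟨rfl, Nat.pow_right_injective hp.two_le h⟩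

lemma summable_master {r : ℝ} {k₀ : ℕ} (hr : 0 < r) (h : 1 < r * k₀) :
    Summable fun x : Nat.Primes × ℕ => ((x.1 : ℕ) : ℝ) ^ (-(r * ((x.2 : ℝ) + k₀))) := by
  have h2 : (0:ℝ) < (2:ℝ) ^ (-r) := Real.rpow_pos_of_pos two_pos _
  have hgeo : Summable fun k : ℕ => ((2:ℝ) ^ (-r)) ^ k :=
    summable_geometric_of_lt_one h2.le
      (Real.rpow_lt_one_of_one_lt_of_neg one_lt_two (neg_neg_of_pos hr))
  have hp : Summable fun p : Nat.Primes => ((p:ℕ):ℝ) ^ (-(r * k₀)) :=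
    Nat.Primes.summable_rpow.mpr (by linarith)
  refine Summable.of_nonneg_of_le (fun x => Real.rpow_nonneg (Nat.cast_nonneg _) _) ?_
    (hp.mul_of_nonneg hgeo (fun p => Real.rpow_nonneg (Nat.cast_nonneg _) _)
      (fun k => pow_nonneg h2.le k))
  rintro ⟨p, k⟩
  have hp2 : (2:ℝ) ≤ ((p:ℕ):ℝ) := by exact_mod_cast p.2.two_le
  have hp0 : (0:ℝ) < ((p:ℕ):ℝ) := by linarith
  have e1 : ((p:ℕ):ℝ) ^ (-(r * ((k:ℝ) + k₀)))
      = ((p:ℕ):ℝ) ^ (-(r * k₀)) * ((p:ℕ):ℝ) ^ ((-r) * k) := by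
    rw [← Real.rpow_add hp0]; ring_nf
  rw [e1]
  refine mul_le_mul_of_nonneg_left ?_ (Real.rpow_nonneg (Nat.cast_nonneg _) _)
  have e2 : ((2:ℝ) ^ (-r)) ^ k = (2:ℝ) ^ ((-r) * k) := by
    rw [← Real.rpow_natCast ((2:ℝ) ^ (-r)) k, ← Real.rpow_mul (by norm_num)]
  rw [e2]
  exact Real.rpow_le_rpow_of_nonpos two_pos hp2
    (mul_nonpos_of_nonpos_of_nonneg (neg_nonpos_of_nonneg hr.le) (Nat.cast_nonneg k))

/-- The generic term of the log-L Dirichlet series, as a function on pairs. -/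
noncomputable def F {q : ℕ} [NeZero q] (χ : DirichletCharacter ℂ q) (s : ℂ)
    (x : Nat.Primes × ℕ+) : ℂ :=
  χ (x.1 : ℕ) ^ ((x.2 : ℕ)) / ((x.2 : ℂ) * (x.1 : ℕ) ^ ((x.2 : ℕ) * s))

lemma norm_term_le {q : ℕ} [NeZero q] (χ : DirichletCharacter ℂ q) (p : Nat.Primes)
    (m : ℕ) (hm : m ≠ 0) (s : ℂ) :
    ‖χ (p:ℕ) ^ m / ((m:ℂ) * ((p:ℕ):ℂ) ^ ((m:ℂ) * s))‖ ≤ ((p:ℕ):ℝ) ^ (-(s.re * m)) := by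
  have hp0 : 0 < (p:ℕ) := p.2.pos
  have hre : (((m:ℕ):ℂ) * s).re = s.re * m := by
    simp [Complex.mul_re]; ring
  rw [norm_div, norm_mul, norm_pow, Complex.norm_natCast,
    norm_natCast_cpow_of_pos hp0, hre, Real.rpow_neg (Nat.cast_nonneg _)]
  have h1 : ‖χ ((p:ℕ) : ZMod q)‖ ^ m ≤ 1 :=
    pow_le_one₀ (norm_nonneg _) (χ.norm_le_one _)
  have hm1 : (1:ℝ) ≤ (m:ℝ) := by exact_mod_cast Nat.one_le_iff_ne_zero.mpr hm
  have hX : (0:ℝ) < ((p:ℕ):ℝ) ^ (s.re * m) :=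
    Real.rpow_pos_of_pos (by exact_mod_cast hp0) _
  rw [inv_eq_one_div]
  calc ‖χ ((p:ℕ) : ZMod q)‖ ^ m / ((m:ℝ) * ((p:ℕ):ℝ) ^ (s.re * m))
      ≤ 1 / (1 * ((p:ℕ):ℝ) ^ (s.re * m)) := by
        apply div_le_div₀ zero_le_one h1 (by nlinarith)
        nlinarith
    _ = 1 / ((p:ℕ):ℝ) ^ (s.re * m) := by rw [one_mul]

lemma norm_F_le {q : ℕ} [NeZero q] (χ : DirichletCharacter ℂ q) (s : ℂ)
    (x : Nat.Primes × ℕ+) :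
    ‖F χ s x‖ ≤ ((x.1:ℕ):ℝ) ^ (-(s.re * (x.2:ℕ))) := by
  obtain ⟨p, m⟩ := x
  have : ((m : ℕ+) : ℂ) = (((m:ℕ) : ℕ) : ℂ) := by norm_cast
  simpa [F] using norm_term_le χ p (m:ℕ) m.pos.ne' s

lemma summable_norm_F {q : ℕ} [NeZero q] (χ : DirichletCharacter ℂ q) {s : ℂ}
    (hs : 1 < s.re) : Summable fun x : Nat.Primes × ℕ+ => ‖F χ s x‖ := by
  have hr : (0:ℝ) < s.re := by linarith
  have hmaster := summable_master (k₀ := 1) hr (by simpa using hs)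
  rw [← Equiv.summable_iff ((Equiv.refl Nat.Primes).prodCongr Equiv.pnatEquivNat.symm)]
  refine Summable.of_nonneg_of_le (fun _ => norm_nonneg _) ?_ hmaster
  rintro ⟨p, k⟩
  have hco : ((k.succPNat : ℕ+) : ℕ) = k + 1 := Nat.succPNat_coe k
  have := norm_F_le χ s (p, k.succPNat)
  simp only [hco] at this
  refine this.trans ?_
  apply le_of_eq
  congr 1
  push_cast
  ring

end GACaux

open GACaux

open scoped Classical in
/-- The coefficients of `G`. -/
noncomputable def GACaux.cfun {q : ℕ} [NeZero q] (χ : DirichletCharacter ℂ q) (n : ℕ) : ℂ :=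
  if ∃ p m : ℕ, p.Prime ∧ 3 ≤ m ∧ Odd m ∧ n = p ^ m
  then -(χ (n.minFac) ^ (n.factorization n.minFac) / ((n.factorization n.minFac : ℕ) : ℂ))
  else 0

namespace GACaux

lemma cfun_ne_zero {q : ℕ} [NeZero q] (χ : DirichletCharacter ℂ q) {n : ℕ}
    (h : cfun χ n ≠ 0) : ∃ p m : ℕ, p.Prime ∧ 3 ≤ m ∧ Odd m ∧ n = p ^ m := by
  by_contra hc
  rw [cfun, if_neg hc] at h
  exact h rfl

lemma cfun_pow_eq {q : ℕ} [NeZero q] (χ : DirichletCharacter ℂ q) {p m : ℕ}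
    (hp : p.Prime) (hm : m ≠ 0) :
    cfun χ (p ^ m) = if 3 ≤ m ∧ Odd m then -(χ p ^ m / (m : ℂ)) else 0 := by
  have h1 : (p ^ m).minFac = p := hp.pow_minFac hm
  have h2 : (p ^ m).factorization p = m := by
    rw [hp.factorization_pow]; simp
  rw [cfun]
  by_cases hcond : 3 ≤ m ∧ Odd m
  · rw [if_pos ⟨p, m, hp, hcond.1, hcond.2, rfl⟩, if_pos hcond, h1, h2]
  · rw [if_neg, if_neg hcond]
    rintro ⟨p', m', hp', h3, hodd, heq⟩
    obtain ⟨rfl, rfl⟩ := prime_pow_inj hp hp' hm heq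
    exact hcond ⟨h3, hodd⟩

lemma norm_cfun_le {q : ℕ} [NeZero q] (χ : DirichletCharacter ℂ q) (n : ℕ) :
    ‖cfun χ n‖ ≤ 1 := by
  by_cases h : ∃ p m : ℕ, p.Prime ∧ 3 ≤ m ∧ Odd m ∧ n = p ^ m
  · obtain ⟨p, m, hp, h3, hodd, rfl⟩ := h
    rw [cfun_pow_eq χ hp (by omega)]
    rw [if_pos ⟨h3, hodd⟩, norm_neg, norm_div, norm_pow, Complex.norm_natCast]
    have h1 : ‖χ (p : ZMod q)‖ ^ m ≤ 1 := pow_le_one₀ (norm_nonneg _) (χ.norm_le_one _)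
    have hm1 : (1:ℝ) ≤ (m:ℝ) := by exact_mod_cast (by omega : 1 ≤ m)
    calc ‖χ (p : ZMod q)‖ ^ m / (m:ℝ) ≤ 1 / 1 :=
          div_le_div₀ zero_le_one h1 one_pos hm1
      _ = 1 := by norm_num
  · rw [cfun, if_neg h]; simp

end GACaux

/-- `G(s) := ∑_p χ(p)/p^s − log L(s,χ) + (1/2) log L(2s,χ²)` (with the logarithms
given by their prime-power Dirichlet series) is a Dirichlet series supported on
prime powers `p^m` with `m ≥ 3`, absolutely convergent for `Re(s) ≥ 0.34`. -/
theorem G_absolutely_convergent {q : ℕ} [NeZero q] (χ : DirichletCharacter ℂ q) :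
    ∃ c : ℕ → ℂ,
      (∀ n : ℕ, c n ≠ 0 → ∃ p m : ℕ, p.Prime ∧ 3 ≤ m ∧ n = p ^ m) ∧
      (∀ s : ℂ, (0.34 : ℝ) ≤ s.re → Summable (fun n : ℕ => ‖c n / (n : ℂ) ^ s‖)) ∧
      ∀ s : ℂ, 1 < s.re →
        (∑' p : Nat.Primes, χ (p : ℕ) / (p : ℕ) ^ s)
          - (∑' p : Nat.Primes, ∑' m : ℕ+,
              χ (p : ℕ) ^ (m : ℕ) / ((m : ℂ) * (p : ℕ) ^ ((m : ℕ) * s)))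
          + (1 / 2) * (∑' p : Nat.Primes, ∑' m : ℕ+,
              (χ ^ 2) (p : ℕ) ^ (m : ℕ) / ((m : ℂ) * (p : ℕ) ^ ((m : ℕ) * (2 * s))))
        = ∑' n : ℕ, c n / (n : ℂ) ^ s := by
  classical
  refine ⟨cfun χ, ?_, ?_, ?_⟩
  · intro n hn
    obtain ⟨p, m, hp, h3, _, rfl⟩ := cfun_ne_zero χ hn
    exact ⟨p, m, hp, h3, rfl⟩
  · -- summability for Re s ≥ 0.34
    intro s hs
    set E : Nat.Primes × ℕ → ℕ := fun x => (x.1:ℕ) ^ (x.2 + 3) with hE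
    have hEinj : Function.Injective E := by
      rintro ⟨p, k⟩ ⟨p', k'⟩ h
      obtain ⟨h1, h2⟩ := prime_pow_inj p.2 p'.2 (by omega) h
      simp only [Prod.mk.injEq]
      exact ⟨Subtype.ext h1, by omega⟩
    have hsupp : ∀ n ∉ Set.range E, ‖cfun χ n / (n : ℂ) ^ s‖ = 0 := by
      intro n hn
      by_contra h
      have hc : cfun χ n ≠ 0 := by
        intro h0
        apply h
        rw [h0]; simp
      obtain ⟨p, m, hp, h3, _, rfl⟩ := cfun_ne_zero χ hc
      exact hn ⟨(⟨p, hp⟩, m - 3), by simp only [hE]; congr 1; omega⟩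
    rw [← hEinj.summable_iff hsupp]
    refine Summable.of_nonneg_of_le (fun _ => norm_nonneg _) ?_
      (summable_master (r := 0.34) (k₀ := 3) (by norm_num) (by norm_num))
    rintro ⟨p, k⟩
    have hp2 : (2:ℝ) ≤ ((p:ℕ):ℝ) := by exact_mod_cast p.2.two_le
    have hp1 : (1:ℝ) ≤ ((p:ℕ):ℝ) := by linarith
    have hpos : 0 < E (p, k) := pow_pos p.2.pos _
    have hposR : (0:ℝ) < ((E (p,k) : ℕ):ℝ) := by exact_mod_cast hpos
    have key : ‖cfun χ (E (p, k)) / ((E (p, k) : ℕ) : ℂ) ^ s‖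
        ≤ (((E (p, k) : ℕ)) : ℝ) ^ (-s.re) := by
      rw [norm_div, norm_natCast_cpow_of_pos hpos,
        Real.rpow_neg (Nat.cast_nonneg _), inv_eq_one_div]
      have hX : (0:ℝ) < ((E (p,k) : ℕ):ℝ) ^ s.re := Real.rpow_pos_of_pos hposR _
      exact div_le_div₀ zero_le_one (norm_cfun_le χ _) hX le_rfl
    show ‖cfun χ (E (p, k)) / ((E (p, k) : ℕ) : ℂ) ^ s‖ ≤ _
    refine key.trans ?_
    -- (p^(k+3))^(-s.re) ≤ p^(-(0.34*(k+3)))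
    have e1 : (((p:ℕ) ^ (k+3) : ℕ) : ℝ) = ((p:ℕ):ℝ) ^ (((k:ℝ) + 3)) := by
      rw [show ((k:ℝ) + 3) = ((k + 3 : ℕ) : ℝ) by push_cast; ring, Real.rpow_natCast]
      push_cast
      ring
    rw [show E (p,k) = (p:ℕ) ^ (k+3) from rfl, e1, ← Real.rpow_mul (by linarith)]
    apply Real.rpow_le_rpow_of_exponent_le hp1
    have hk0 : (0:ℝ) ≤ (k:ℝ) := Nat.cast_nonneg k
    nlinarith
  · -- the identity for Re s > 1
    intro s hs
    have h2s : (2 * s).re = 2 * s.re := by simp [Complex.mul_re]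
    have hF : Summable fun x : Nat.Primes × ℕ+ => ‖F χ s x‖ := summable_norm_F χ hs
    have hF2 : Summable fun x : Nat.Primes × ℕ+ => ‖F (χ ^ 2) (2 * s) x‖ :=
      summable_norm_F _ (by rw [h2s]; linarith)
    have hFs : Summable (F χ s) := hF.of_norm
    have hF2s : Summable (F (χ ^ 2) (2 * s)) := hF2.of_norm
    -- indicator functions
    set H1 : Nat.Primes × ℕ+ → ℂ := fun x => if x.2 = 1 then F χ s x else 0 with hH1def
    set H2 : Nat.Primes × ℕ+ → ℂ := fun x => if 2 ∣ (x.2:ℕ) then F χ s x else 0 with hH2def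
    set H3 : Nat.Primes × ℕ+ → ℂ :=
      fun x => if Odd (x.2:ℕ) ∧ 3 ≤ (x.2:ℕ) then -F χ s x else 0 with hH3def
    have hH1 : Summable H1 := by
      refine Summable.of_norm (hF.of_nonneg_of_le (fun _ => norm_nonneg _) fun x => ?_)
      by_cases h : x.2 = 1 <;> simp [hH1def, h, norm_nonneg]
    have hH2 : Summable H2 := by
      refine Summable.of_norm (hF.of_nonneg_of_le (fun _ => norm_nonneg _) fun x => ?_)
      by_cases h : 2 ∣ (x.2:ℕ) <;> simp [hH2def, h, norm_nonneg]
    -- Step (i): first sum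
    have step1 : (∑' p : Nat.Primes, χ (p : ℕ) / (p : ℕ) ^ s) = ∑' x, H1 x := by
      have hinj : Function.Injective (fun p : Nat.Primes => ((p, 1) : Nat.Primes × ℕ+)) :=
        fun a b h => congrArg Prod.fst h
      have hsupp : Function.support H1 ⊆ Set.range fun p : Nat.Primes => ((p, 1) : Nat.Primes × ℕ+) := by
        rintro ⟨p, m⟩ hx
        simp only [hH1def, Function.mem_support, ne_eq, ite_eq_right_iff, not_forall] at hx
        exact ⟨p, by rw [hx.1]⟩
      rw [← hinj.tsum_eq hsupp]
      refine tsum_congr fun p => ?_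
      simp [hH1def, F]
    -- Step (ii): log L(s,χ) sum
    have step2 : (∑' p : Nat.Primes, ∑' m : ℕ+,
        χ (p : ℕ) ^ (m : ℕ) / ((m : ℂ) * (p : ℕ) ^ ((m : ℕ) * s))) = ∑' x, F χ s x :=
      (Summable.tsum_prod' hFs fun p => hFs.prod_factor p).symm
    -- Step (iii): log L(2s,χ²) sum
    have step3 : (∑' p : Nat.Primes, ∑' m : ℕ+,
        (χ ^ 2) (p : ℕ) ^ (m : ℕ) / ((m : ℂ) * (p : ℕ) ^ ((m : ℕ) * (2 * s))))
        = ∑' x, F (χ ^ 2) (2 * s) x :=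
      (Summable.tsum_prod' hF2s fun p => hF2s.prod_factor p).symm
    have half_helper : ∀ a b x : ℂ, b ≠ 0 → a / (b * x) = 2 * (a / (2 * b * x)) := by
      intro a b x hb
      rcases eq_or_ne x 0 with rfl | hx
      · simp
      · field_simp
    have hFsq : ∀ x : Nat.Primes × ℕ+, F (χ ^ 2) (2 * s) x = 2 * F χ s (x.1, 2 * x.2) := by
      rintro ⟨p, m⟩
      simp only [F]
      have happ : (χ ^ 2) ((p:ℕ) : ZMod q) = χ ((p:ℕ) : ZMod q) ^ 2 :=
        MulChar.pow_apply' χ two_ne_zero _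
      have hco : ((2 * m : ℕ+) : ℕ) = 2 * (m : ℕ) := by simp
      rw [happ, ← pow_mul, hco]
      push_cast
      have hX : ((p:ℕ):ℂ) ^ ((((m:ℕ)):ℂ) * (2 * s)) = ((p:ℕ):ℂ) ^ (2 * (((m:ℕ)):ℂ) * s) := by
        congr 1; ring
      rw [hX]
      exact half_helper _ _ _ (Nat.cast_ne_zero.mpr m.pos.ne')
    have step3' : (1 / 2 : ℂ) * (∑' x, F (χ ^ 2) (2 * s) x) = ∑' x, H2 x := by
      have hd : Function.Injective
          (fun x : Nat.Primes × ℕ+ => ((x.1, 2 * x.2) : Nat.Primes × ℕ+)) := by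
        rintro ⟨p, m⟩ ⟨p', m'⟩ h
        simp only [Prod.mk.injEq] at h ⊢
        exact ⟨h.1, mul_left_cancel h.2⟩
      have hsupp : Function.support H2 ⊆
          Set.range fun x : Nat.Primes × ℕ+ => ((x.1, 2 * x.2) : Nat.Primes × ℕ+) := by
        rintro ⟨p, m⟩ hx
        simp only [hH2def, Function.mem_support, ne_eq, ite_eq_right_iff, not_forall] at hx
        obtain ⟨k, hk⟩ := hx.1
        have hk0 : 0 < k := by have := m.pos; omega
        refine ⟨(p, ⟨k, hk0⟩), Prod.ext rfl ?_⟩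
        apply PNat.coe_injective
        rw [PNat.mul_coe, hk]
        norm_num
      have := hd.tsum_eq (f := H2) hsupp
      rw [← this]
      have : ∀ x : Nat.Primes × ℕ+, H2 (x.1, 2 * x.2) = F χ s (x.1, 2 * x.2) := by
        intro x
        simp only [hH2def]
        rw [if_pos]
        simp [PNat.mul_coe]
      simp_rw [this]
      calc (1 / 2 : ℂ) * (∑' x, F (χ ^ 2) (2 * s) x)
          = (1 / 2 : ℂ) * (∑' x : Nat.Primes × ℕ+, 2 * F χ s (x.1, 2 * x.2)) := by
            rw [tsum_congr hFsq]
        _ = (1 / 2 : ℂ) * (2 * ∑' x : Nat.Primes × ℕ+, F χ s (x.1, 2 * x.2)) := by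
            rw [tsum_mul_left]
        _ = ∑' x : Nat.Primes × ℕ+, F χ s (x.1, 2 * x.2) := by ring
    rw [step1, step2, step3, step3']
    -- combine the three sums into one
    rw [← Summable.tsum_sub hH1 hFs, ← Summable.tsum_add ((hH1.sub hFs)) hH2]
    have pointwise : ∀ x : Nat.Primes × ℕ+, H1 x - F χ s x + H2 x = H3 x := by
      rintro ⟨p, m⟩
      simp only [hH1def, hH2def, hH3def]
      by_cases h1 : m = 1
      · subst h1
        rw [if_pos rfl, if_neg (by norm_num), if_neg (by norm_num)]
        ring
      · rw [if_neg h1]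
        rcases Nat.even_or_odd (m:ℕ) with he | ho
        · rw [if_pos he.two_dvd, if_neg (by simp [Nat.not_odd_iff_even.mpr he])]
          ring
        · have h3 : 3 ≤ (m:ℕ) := by
            obtain ⟨k, hk⟩ := ho
            have hm1 : (m:ℕ) ≠ 1 := fun h => h1 (PNat.coe_injective (by simp [h]))
            have := m.pos
            omega
          rw [if_neg (by rw [Nat.two_dvd_ne_zero]; exact Nat.odd_iff.mp ho),
            if_pos ⟨ho, h3⟩]
          ring
    rw [tsum_congr pointwise]
    -- final reindexing to ℕ
    have hEinj : Function.Injective (fun x : Nat.Primes × ℕ+ => (x.1:ℕ) ^ (x.2:ℕ)) := by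
      rintro ⟨p, m⟩ ⟨p', m'⟩ h
      obtain ⟨h1, h2⟩ := prime_pow_inj p.2 p'.2 m.pos.ne' h
      simp only [Prod.mk.injEq]
      exact ⟨Subtype.ext h1, PNat.coe_injective h2⟩
    have hsupp : Function.support (fun n : ℕ => cfun χ n / (n : ℂ) ^ s) ⊆
        Set.range fun x : Nat.Primes × ℕ+ => (x.1:ℕ) ^ (x.2:ℕ) := by
      intro n hn
      have hc : cfun χ n ≠ 0 := by
        intro h0
        apply hn
        simp [h0]
      obtain ⟨p, m, hp, h3, _, rfl⟩ := cfun_ne_zero χ hc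
      exact ⟨(⟨p, hp⟩, ⟨m, by omega⟩), rfl⟩
    rw [← hEinj.tsum_eq hsupp]
    refine tsum_congr fun x => ?_
    obtain ⟨p, m⟩ := x
    show H3 (p, m) = cfun χ ((p:ℕ) ^ (m:ℕ)) / (((p:ℕ) ^ (m:ℕ) : ℕ) : ℂ) ^ s
    have hcast : (((p:ℕ) ^ (m:ℕ) : ℕ) : ℂ) ^ s = ((p:ℕ):ℂ) ^ (((m:ℕ):ℂ) * s) := by
      push_cast
      rw [natCast_cpow_natCast_mul]
    rw [cfun_pow_eq χ p.2 m.pos.ne', hcast]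
    simp only [hH3def]
    by_cases hcond : 3 ≤ (m:ℕ) ∧ Odd (m:ℕ)
    · rw [if_pos hcond, if_pos ⟨hcond.2, hcond.1⟩]
      simp only [F]
      rw [neg_div, div_div]
    · rw [if_neg hcond, if_neg (fun h => hcond ⟨h.2, h.1⟩), zero_div]
end

section
/- For any integers k ≥ 1 and m ≥ 0, and for x ≥ 3, the integral from 0 to δ (with fixed 0 < δ < 1) of |(log σ − iπ)^k − (log σ + iπ)^k| · σ^m · x^{−σ} dσ is O_{m,k}((log log x)^{k−1}/(log x)^{m+1}). -/
open Real Complex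
open MeasureTheory Set
set_option maxHeartbeats 1000000

lemma norm_pow_sub_pow_aux (a b : ℂ) (M : ℝ) (k : ℕ) (ha : ‖a‖ ≤ M) (hb : ‖b‖ ≤ M) :
    ‖a ^ k - b ^ k‖ ≤ k * M ^ (k - 1) * ‖a - b‖ := by
  have hM : 0 ≤ M := le_trans (norm_nonneg a) ha
  rw [← geom_sum₂_mul a b k, norm_mul]
  gcongr
  calc ‖∑ i ∈ Finset.range k, a ^ i * b ^ (k - 1 - i)‖
      ≤ ∑ i ∈ Finset.range k, ‖a ^ i * b ^ (k - 1 - i)‖ := norm_sum_le _ _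
    _ ≤ ∑ _i ∈ Finset.range k, M ^ (k - 1) := by
        apply Finset.sum_le_sum
        intro i hi
        rw [norm_mul, norm_pow, norm_pow]
        calc ‖a‖ ^ i * ‖b‖ ^ (k - 1 - i) ≤ M ^ i * M ^ (k - 1 - i) := by
              gcongr
          _ = M ^ (k - 1) := by
              rw [← pow_add]
              congr 1
              have := Finset.mem_range.mp hi
              omega
    _ = k * M ^ (k - 1) := by simp [Finset.sum_const, mul_comm]

lemma log_le_rpow_div (s β : ℝ) (hs : 0 < s) (hβ : 0 < β) : Real.log s ≤ s ^ β / β := by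
  have h1 : Real.log (s ^ β) ≤ s ^ β - 1 := Real.log_le_sub_one_of_pos (Real.rpow_pos_of_pos hs β)
  rw [Real.log_rpow hs] at h1
  rw [le_div_iff₀ hβ]
  nlinarith


/-- For integers `k ≥ 1`, `m ≥ 0`, fixed `0 < δ < 1`, and `x ≥ 3`:
`∫_0^δ |(log σ − iπ)^k − (log σ + iπ)^k| σ^m x^{−σ} dσ ≪_{m,k} (log log x)^{k−1}/(log x)^{m+1}`. -/
theorem integral_log_power_bound (k m : ℕ) (hk : 1 ≤ k) (δ : ℝ) (hδ0 : 0 < δ)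
    (hδ1 : δ < 1) :
    ∃ C : ℝ, 0 < C ∧ ∀ x : ℝ, 3 ≤ x →
      (∫ σ in (0:ℝ)..δ,
          ‖((Real.log σ : ℂ) - Real.pi * Complex.I) ^ k -
            ((Real.log σ : ℂ) + Real.pi * Complex.I) ^ k‖ * σ ^ m * x ^ (-σ)) ≤
        C * (Real.log (Real.log x)) ^ (k - 1) / (Real.log x) ^ (m + 1) := by
  have hπ := Real.pi_pos
  have hk0 : (0:ℝ) < k := by exact_mod_cast hk
  set n := k - 1 with hn
  have hnk : (n:ℝ) ≤ k := by exact_mod_cast Nat.sub_le k 1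
  set β : ℝ := 1 / (2 * (k:ℝ)) with hβdef
  have hβ : 0 < β := by positivity
  set γ : ℝ := β * n with hγdef
  have hγ0 : 0 ≤ γ := by positivity
  have hγhalf : γ ≤ 1 / 2 := by
    rw [hγdef, hβdef, div_mul_eq_mul_div, one_mul, div_le_div_iff₀ (by positivity) (by norm_num)]
    linarith
  have hc3 : 1 < Real.log 3 := by
    rw [Real.lt_log_iff_exp_lt (by norm_num)]
    have := Real.exp_one_lt_d9
    linarith
  set c : ℝ := Real.log (Real.log 3) with hcdef
  have hc : 0 < c := Real.log_pos hc3
  have hm1γ : 0 < (m:ℝ) + 1 - γ := by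
    have : (0:ℝ) ≤ m := Nat.cast_nonneg m
    linarith
  have hΓ1 : 0 < Real.Gamma ((m:ℝ) + 1) := Real.Gamma_pos_of_pos (by positivity)
  have hΓ2 : 0 < Real.Gamma ((m:ℝ) + 1 - γ) := Real.Gamma_pos_of_pos hm1γ
  set A : ℝ := 2 * π * k * 2 ^ n * Real.Gamma ((m:ℝ) + 1) with hA
  set B : ℝ := 2 * π * k * 2 ^ n * (2 * (k:ℝ)) ^ n * Real.Gamma ((m:ℝ) + 1 - γ) with hB
  have hApos : 0 < A := by rw [hA]; positivity
  have hBpos : 0 < B := by rw [hB]; positivity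
  refine ⟨A * (π / c + 2) ^ n + B / c ^ n, by positivity, ?_⟩
  intro x hx
  have hx0 : (0:ℝ) < x := by linarith
  set F : ℝ → ℝ := fun σ => ‖((Real.log σ : ℂ) - Real.pi * Complex.I) ^ k -
            ((Real.log σ : ℂ) + Real.pi * Complex.I) ^ k‖ * σ ^ m * x ^ (-σ) with hF
  set L := Real.log x with hLdef
  have hL3 : Real.log 3 ≤ L := Real.log_le_log (by norm_num) hx
  have hL1 : 1 < L := lt_of_lt_of_le hc3 hL3
  have hL0 : 0 < L := by linarith
  have hlogL : c ≤ Real.log L := Real.log_le_log (by linarith) hL3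
  have hlogL0 : 0 < Real.log L := lt_of_lt_of_le hc hlogL
  set c1 : ℝ := 2 * π * k * 2 ^ n * (π + 2 * Real.log L) ^ n with hc1
  set c2 : ℝ := 2 * π * k * 2 ^ n * (2 * (k:ℝ)) ^ n * (L ^ 2) ^ (-γ) with hc2
  have hc1nn : 0 ≤ c1 := by rw [hc1]; positivity
  have hc2nn : 0 ≤ c2 := by rw [hc2]; positivity
  set g1 : ℝ → ℝ := fun σ => σ ^ ((m:ℝ)) * Real.exp (-(L * σ)) with hg1
  set g2 : ℝ → ℝ := fun σ => σ ^ ((m:ℝ) - γ) * Real.exp (-(L * σ)) with hg2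
  set G : ℝ → ℝ := fun σ => c1 * g1 σ + c2 * g2 σ with hG
  -- integrability of g1, g2, G
  have hint1 : IntegrableOn g1 (Ioi (0:ℝ)) := by
    have h := integrableOn_rpow_mul_exp_neg_mul_rpow (s := (m:ℝ)) (p := 1) (b := L)
      (by linarith [Nat.cast_nonneg (α := ℝ) m]) one_pos hL0
    rw [hg1]
    simpa [Real.rpow_one, neg_mul] using h
  have hint2 : IntegrableOn g2 (Ioi (0:ℝ)) := by
    have h := integrableOn_rpow_mul_exp_neg_mul_rpow (s := (m:ℝ) - γ) (p := 1) (b := L)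
      (by linarith) one_pos hL0
    rw [hg2]
    simpa [Real.rpow_one, neg_mul] using h
  have hGIoi : IntegrableOn G (Ioi (0:ℝ)) := by
    rw [hG]
    exact (hint1.const_mul c1).add (hint2.const_mul c2)
  have hGIoc : IntegrableOn G (Ioc (0:ℝ) δ) := hGIoi.mono_set Ioc_subset_Ioi_self
  -- pointwise bound
  have key : ∀ σ ∈ Ioc (0:ℝ) δ, F σ ≤ G σ := by
    rintro σ ⟨hσ0, hσδ⟩
    have hσ1 : σ < 1 := lt_of_le_of_lt hσδ hδ1
    set a : ℂ := (Real.log σ : ℂ) - Real.pi * Complex.I with ha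
    set b : ℂ := (Real.log σ : ℂ) + Real.pi * Complex.I with hb
    set M : ℝ := |Real.log σ| + π with hM
    have hMa : ‖a‖ ≤ M := by
      refine le_trans (norm_sub_le _ _) ?_
      simp [hM, Complex.norm_real, Complex.norm_I, abs_of_pos hπ, Real.norm_eq_abs]
    have hMb : ‖b‖ ≤ M := by
      refine le_trans (norm_add_le _ _) ?_
      simp [hM, Complex.norm_real, Complex.norm_I, abs_of_pos hπ, Real.norm_eq_abs]
    have hab : ‖a - b‖ = 2 * π := by
      have h1 : a - b = -(2 * (Real.pi:ℂ) * Complex.I) := by rw [ha, hb]; ring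
      rw [h1, norm_neg]
      simp [Complex.norm_real, Complex.norm_I, abs_of_pos hπ, Real.norm_eq_abs]
    have h1 : ‖a ^ k - b ^ k‖ ≤ 2 * π * k * M ^ n := by
      have h2 := norm_pow_sub_pow_aux a b M k hMa hMb
      rw [hab] at h2
      exact h2.trans_eq (by ring)
    have hxσ : x ^ (-σ) = Real.exp (-(L * σ)) := by
      rw [Real.rpow_def_of_pos hx0, mul_neg]
    -- log bound
    have hlog2 : M ≤ (π + 2 * Real.log L) + 2 * k * (σ ^ (-β) * (L ^ 2) ^ (-β)) := by
      have habs : |Real.log σ| = -Real.log σ := abs_of_neg (Real.log_neg hσ0 hσ1)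
      have ht : (0:ℝ) < σ * L ^ 2 := by positivity
      have h2 : Real.log (σ * L ^ 2) = Real.log σ + 2 * Real.log L := by
        rw [Real.log_mul hσ0.ne' (by positivity), Real.log_pow]
        push_cast; ring
      have h3 := log_le_rpow_div (σ * L ^ 2)⁻¹ β (by positivity) hβ
      rw [Real.log_inv, Real.inv_rpow ht.le, ← Real.rpow_neg ht.le] at h3
      have h4 : (σ * L ^ 2) ^ (-β) = σ ^ (-β) * (L ^ 2) ^ (-β) :=
        Real.mul_rpow hσ0.le (by positivity)
      have h5 : (σ * L ^ 2) ^ (-β) / β = 2 * k * (σ ^ (-β) * (L ^ 2) ^ (-β)) := by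
        rw [h4, hβdef]
        field_simp
      rw [hM, habs]
      rw [h5] at h3
      linarith
    have hMn : M ^ n ≤ 2 ^ n * ((π + 2 * Real.log L) ^ n
        + (2 * (k:ℝ)) ^ n * (σ ^ (-γ) * (L ^ 2) ^ (-γ))) := by
      set u : ℝ := π + 2 * Real.log L with hu
      set v : ℝ := 2 * k * (σ ^ (-β) * (L ^ 2) ^ (-β)) with hv
      have hunn : 0 ≤ u := by rw [hu]; positivity
      have hvnn : 0 ≤ v := by
        rw [hv]
        have : (0:ℝ) ≤ σ ^ (-β) := Real.rpow_nonneg hσ0.le _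
        positivity
      have hM0 : 0 ≤ M := by rw [hM]; positivity
      have hvn : v ^ n = (2 * (k:ℝ)) ^ n * (σ ^ (-γ) * (L ^ 2) ^ (-γ)) := by
        rw [hv, mul_pow (2*(k:ℝ)), mul_pow (σ ^ (-β)), ← Real.rpow_natCast (σ ^ (-β)) n,
          ← Real.rpow_natCast ((L ^ 2) ^ (-β)) n, ← Real.rpow_mul hσ0.le,
          ← Real.rpow_mul (by positivity),
          show -β * (n:ℝ) = -γ by rw [hγdef]; ring]
      calc M ^ n ≤ (u + v) ^ n := pow_le_pow_left₀ hM0 hlog2 n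
        _ ≤ 2 ^ (n - 1) * (u ^ n + v ^ n) := add_pow_le hunn hvnn n
        _ ≤ 2 ^ n * (u ^ n + v ^ n) := by
            have h6 : (2:ℝ) ^ (n - 1) ≤ 2 ^ n := pow_le_pow_right₀ (by norm_num) (Nat.sub_le n 1)
            have h7 : 0 ≤ u ^ n + v ^ n := by positivity
            exact mul_le_mul_of_nonneg_right h6 h7
        _ = 2 ^ n * (u ^ n + (2 * (k:ℝ)) ^ n * (σ ^ (-γ) * (L ^ 2) ^ (-γ))) := by rw [hvn]
    have hGσ : G σ = 2 * π * k * (2 ^ n * ((π + 2 * Real.log L) ^ n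
        + (2 * (k:ℝ)) ^ n * (σ ^ (-γ) * (L ^ 2) ^ (-γ)))) * (σ ^ m * Real.exp (-(L * σ))) := by
      rw [hG, hg1, hg2, hc1, hc2]
      simp only
      rw [show (m:ℝ) - γ = (m:ℝ) + (-γ) by ring, Real.rpow_add hσ0, Real.rpow_natCast]
      ring
    have hexpnn : (0:ℝ) ≤ σ ^ m * Real.exp (-(L * σ)) := by positivity
    calc F σ = ‖a ^ k - b ^ k‖ * (σ ^ m * Real.exp (-(L * σ))) := by
          rw [hF]; simp only; rw [hxσ, ha, hb]; ring
      _ ≤ (2 * π * k * M ^ n) * (σ ^ m * Real.exp (-(L * σ))) :=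
          mul_le_mul_of_nonneg_right h1 hexpnn
      _ ≤ (2 * π * k * (2 ^ n * ((π + 2 * Real.log L) ^ n
            + (2 * (k:ℝ)) ^ n * (σ ^ (-γ) * (L ^ 2) ^ (-γ))))) * (σ ^ m * Real.exp (-(L * σ))) := by
          refine mul_le_mul_of_nonneg_right ?_ hexpnn
          exact mul_le_mul_of_nonneg_left hMn (by positivity)
      _ = G σ := hGσ.symm
  -- measurability and integrability of F
  have hFmeas : Measurable F := by
    rw [hF]
    have hlogC : Measurable fun σ : ℝ => ((Real.log σ : ℝ) : ℂ) :=
      Complex.measurable_ofReal.comp Real.measurable_log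
    have h1 : Measurable fun σ : ℝ => ‖((Real.log σ : ℂ) - Real.pi * Complex.I) ^ k -
        ((Real.log σ : ℂ) + Real.pi * Complex.I) ^ k‖ :=
      (((hlogC.sub measurable_const).pow_const k).sub
        ((hlogC.add measurable_const).pow_const k)).norm
    have h2 : Measurable fun σ : ℝ => x ^ (-σ) := by
      have : (fun σ : ℝ => x ^ (-σ)) = fun σ => Real.exp (Real.log x * -σ) :=
        funext fun σ => Real.rpow_def_of_pos hx0 _
      rw [this]
      exact Real.measurable_exp.comp (measurable_neg.const_mul _)
    exact (h1.mul (measurable_id.pow_const m)).mul h2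
  have hFint : IntegrableOn F (Ioc (0:ℝ) δ) := by
    apply Integrable.mono' hGIoc hFmeas.aestronglyMeasurable
    rw [ae_restrict_iff' measurableSet_Ioc]
    filter_upwards with σ hσ
    rw [Real.norm_of_nonneg]
    · exact key σ hσ
    · rw [hF]
      exact mul_nonneg (mul_nonneg (norm_nonneg _) (pow_nonneg hσ.1.le m))
        (Real.rpow_nonneg hx0.le _)
  -- integral values
  have hI1 : ∫ σ in Ioi (0:ℝ), g1 σ = (1 / L) ^ ((m:ℝ) + 1) * Real.Gamma ((m:ℝ) + 1) := by
    have h := Real.integral_rpow_mul_exp_neg_mul_Ioi (a := (m:ℝ) + 1) (r := L)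
      (by positivity) hL0
    rw [show (m:ℝ) + 1 - 1 = (m:ℝ) by ring] at h
    rw [hg1]
    exact h
  have hI2 : ∫ σ in Ioi (0:ℝ), g2 σ
      = (1 / L) ^ ((m:ℝ) + 1 - γ) * Real.Gamma ((m:ℝ) + 1 - γ) := by
    have h := Real.integral_rpow_mul_exp_neg_mul_Ioi (a := (m:ℝ) + 1 - γ) (r := L) hm1γ hL0
    rw [show (m:ℝ) + 1 - γ - 1 = (m:ℝ) - γ by ring] at h
    rw [hg2]
    exact h
  have hGnn : ∀ σ ∈ Ioi (0:ℝ), 0 ≤ G σ := by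
    intro σ hσ
    rw [hG, hg1, hg2]
    simp only
    have h1 : (0:ℝ) ≤ σ ^ ((m:ℝ)) := Real.rpow_nonneg (le_of_lt hσ) _
    have h2 : (0:ℝ) ≤ σ ^ ((m:ℝ) - γ) := Real.rpow_nonneg (le_of_lt hσ) _
    have h3 := Real.exp_nonneg (-(L * σ))
    exact add_nonneg (mul_nonneg hc1nn (mul_nonneg h1 h3))
      (mul_nonneg hc2nn (mul_nonneg h2 h3))
  -- chain
  rw [intervalIntegral.integral_of_le hδ0.le]
  have step1 : ∫ σ in Ioc (0:ℝ) δ, F σ ≤ ∫ σ in Ioc (0:ℝ) δ, G σ :=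
    setIntegral_mono_on hFint hGIoc measurableSet_Ioc key
  have step2 : ∫ σ in Ioc (0:ℝ) δ, G σ ≤ ∫ σ in Ioi (0:ℝ), G σ := by
    apply setIntegral_mono_set hGIoi
    · filter_upwards [ae_restrict_mem measurableSet_Ioi] with σ hσ
      exact hGnn σ hσ
    · exact HasSubset.Subset.eventuallyLE Ioc_subset_Ioi_self
  have step3 : ∫ σ in Ioi (0:ℝ), G σ
      = c1 * ((1 / L) ^ ((m:ℝ) + 1) * Real.Gamma ((m:ℝ) + 1))
        + c2 * ((1 / L) ^ ((m:ℝ) + 1 - γ) * Real.Gamma ((m:ℝ) + 1 - γ)) := by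
    rw [hG, integral_add (hint1.const_mul c1) (hint2.const_mul c2),
      integral_const_mul, integral_const_mul, hI1, hI2]
  -- final arithmetic
  set P : ℝ := L ^ (m + 1) with hP
  have hPpos : 0 < P := by rw [hP]; positivity
  have e1 : (1 / L) ^ ((m:ℝ) + 1) = 1 / P := by
    rw [one_div, Real.inv_rpow hL0.le, show ((m:ℝ) + 1) = ((m + 1 : ℕ) : ℝ) by push_cast; ring,
      Real.rpow_natCast, ← one_div]
  have e2 : (1 / L) ^ ((m:ℝ) + 1 - γ) = L ^ γ / P := by
    rw [one_div, Real.inv_rpow hL0.le, Real.rpow_sub hL0, inv_div,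
      show ((m:ℝ) + 1) = ((m + 1 : ℕ) : ℝ) by push_cast; ring, Real.rpow_natCast]
  have e3 : (L ^ 2) ^ (-γ) * L ^ γ ≤ 1 := by
    rw [← Real.rpow_natCast L 2, ← Real.rpow_mul hL0.le, ← Real.rpow_add hL0]
    apply Real.rpow_le_one_of_one_le_of_nonpos hL1.le
    push_cast
    linarith
  have upi : π + 2 * Real.log L ≤ (π / c + 2) * Real.log L := by
    have : π = π / c * c := by field_simp
    nlinarith [div_nonneg hπ.le hc.le]
  have hun : (π + 2 * Real.log L) ^ n ≤ (π / c + 2) ^ n * (Real.log L) ^ n := by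
    rw [← mul_pow]
    exact pow_le_pow_left₀ (by positivity) upi n
  have hBn : B ≤ B / c ^ n * (Real.log L) ^ n := by
    have h1 : c ^ n ≤ (Real.log L) ^ n := pow_le_pow_left₀ hc.le hlogL n
    have h2 : B = B / c ^ n * c ^ n := (div_mul_cancel₀ B (pow_ne_zero n hc.ne')).symm
    calc B = B / c ^ n * c ^ n := h2
      _ ≤ B / c ^ n * (Real.log L) ^ n :=
          mul_le_mul_of_nonneg_left h1 (by positivity)
  calc ∫ σ in Ioc (0:ℝ) δ, F σ ≤ ∫ σ in Ioi (0:ℝ), G σ := step1.trans step2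
    _ = c1 * ((1 / L) ^ ((m:ℝ) + 1) * Real.Gamma ((m:ℝ) + 1))
        + c2 * ((1 / L) ^ ((m:ℝ) + 1 - γ) * Real.Gamma ((m:ℝ) + 1 - γ)) := step3
    _ = (A * (π + 2 * Real.log L) ^ n
        + B * ((L ^ 2) ^ (-γ) * L ^ γ)) / P := by
        rw [e1, e2, hc1, hc2, hA, hB]
        field_simp [hPpos.ne']
    _ ≤ (A * ((π / c + 2) ^ n * (Real.log L) ^ n)
        + B / c ^ n * (Real.log L) ^ n) / P := by
        have t1 : A * (π + 2 * Real.log L) ^ n ≤ A * ((π / c + 2) ^ n * (Real.log L) ^ n) :=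
          mul_le_mul_of_nonneg_left hun hApos.le
        have t2 : B * ((L ^ 2) ^ (-γ) * L ^ γ) ≤ B / c ^ n * (Real.log L) ^ n := by
          calc B * ((L ^ 2) ^ (-γ) * L ^ γ) ≤ B * 1 := mul_le_mul_of_nonneg_left e3 hBpos.le
            _ = B := mul_one B
            _ ≤ _ := hBn
        have := add_le_add t1 t2
        exact div_le_div_of_nonneg_right this hPpos.le
    _ = (A * (π / c + 2) ^ n + B / c ^ n) * (Real.log L) ^ n / P := by ring
end
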